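/- arXiv:2304.05261 — 2 statements merged into one kernel-verified Lean document; each statement's English description precedes it below -/
import Mathlib

section
/- (Lemma 4 of the paper) Fix n > 0 and 0 < w < w'. Then the ratio θ ↦ Ψ̄_n(θw) / Ψ̄_n(θw') is monotonically increasing in θ > 0. -/
/-!
Write `f` for the `χ²_n` density and `Ψ̄` for its survival function, so `Ψ̄' = -f`. The
logarithmic derivative of `θ ↦ Ψ̄(θw) / Ψ̄(θw')` is `(h(θw') - h(θw)) / θ` with
`h(x) = x f(x) / Ψ̄(x)`, so it suffices that `h` is strictly increasing. The derivative of `h`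
has the sign of `(n - x)/2 · Ψ̄(x) + x f(x)`. Since `(x f(x))' = (n - x)/2 · f(x)` and
`x f(x) → 0` at infinity, `x f(x) = ∫_x^∞ (t - n)/2 · f(t) dt`, and that quantity equals
`∫_x^∞ (t - x)/2 · f(t) dt > 0`.
-/

/-- Chi-squared density with `n > 0` degrees of freedom. -/
noncomputable def chiPDF (n y : ℝ) : ℝ :=
  if 0 < y then Real.exp (-y / 2) * y ^ (n / 2 - 1) / (2 ^ (n / 2) * Real.Gamma (n / 2)) else 0

/-- Chi-squared survival function `Ψ̄_n`. -/
noncomputable def chiSurv (n x : ℝ) : ℝ := ∫ t in Set.Ioi x, chiPDF n t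

open Real Set MeasureTheory Filter Topology
open scoped ENNReal

lemma strictMonoOn_Ioi_of_hasDerivAt_pos {f f' : ℝ → ℝ} {a : ℝ}
    (hf : ∀ x ∈ Ioi a, HasDerivAt f (f' x) x) (hf' : ∀ x ∈ Ioi a, 0 < f' x) :
    StrictMonoOn f (Ioi a) :=
  strictMonoOn_of_hasDerivWithinAt_pos (convex_Ioi a)
    (fun x hx => (hf x hx).continuousAt.continuousWithinAt)
    (fun x hx => (hf x (interior_subset hx)).hasDerivWithinAt)
    (fun x hx => hf' x (interior_subset hx))

lemma setIntegral_Ioi_pos {g : ℝ → ℝ} {a : ℝ} (hg : IntegrableOn g (Ioi a))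
    (hpos : ∀ t ∈ Ioi a, 0 < g t) : 0 < ∫ t in Ioi a, g t := by
  rw [setIntegral_pos_iff_support_of_nonneg_ae
    ((ae_restrict_iff' measurableSet_Ioi).2 (ae_of_all _ fun t ht => (hpos t ht).le)) hg]
  calc (0 : ℝ≥0∞) < volume (Ioi a) := by simp
    _ ≤ volume (Function.support g ∩ Ioi a) :=
      measure_mono fun t ht => ⟨(hpos t ht).ne', ht⟩

lemma strictMonoOn_div_comp_mul_of_strictMonoOn_mul_div {S f : ℝ → ℝ}
    (hS : ∀ x ∈ Ioi (0 : ℝ), HasDerivAt S (-f x) x) (hS_pos : ∀ x ∈ Ioi (0 : ℝ), 0 < S x)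
    (h_mono : StrictMonoOn (fun x => x * f x / S x) (Ioi 0)) {w w' : ℝ} (hw : 0 < w)
    (hww' : w < w') :
    StrictMonoOn (fun θ => S (θ * w) / S (θ * w')) (Ioi 0) := by
  have hw' : 0 < w' := hw.trans hww'
  refine strictMonoOn_Ioi_of_hasDerivAt_pos (fun θ (hθ : 0 < θ) =>
    ((hS _ (mul_pos hθ hw)).comp θ (hasDerivAt_mul_const w)).div
      ((hS _ (mul_pos hθ hw')).comp θ (hasDerivAt_mul_const w'))
      (hS_pos _ (mul_pos hθ hw')).ne')
    fun θ (hθ : 0 < θ) => ?_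
  have hSa := hS_pos _ (mul_pos hθ hw)
  have hSb := hS_pos _ (mul_pos hθ hw')
  have h_lt := h_mono (mul_pos hθ hw) (mul_pos hθ hw') (mul_lt_mul_of_pos_left hww' hθ)
  rw [div_lt_div_iff₀ hSa hSb] at h_lt
  have h_num : w * f (θ * w) * S (θ * w') < w' * f (θ * w') * S (θ * w) := by
    nlinarith
  show 0 < (-f (θ * w) * w * S (θ * w') - S (θ * w) * (-f (θ * w') * w')) / S (θ * w') ^ 2
  exact div_pos (by linarith) (by positivity)

section ChiSquared

variable {n : ℝ}

lemma chiPDF_of_pos {y : ℝ} (hy : 0 < y) :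
    chiPDF n y = exp (-y / 2) * y ^ (n / 2 - 1) / (2 ^ (n / 2) * Gamma (n / 2)) :=
  if_pos hy

lemma chiPDF_pos (hn : 0 < n) {y : ℝ} (hy : 0 < y) : 0 < chiPDF n y := by
  have : 0 < Gamma (n / 2) := Gamma_pos_of_pos (by positivity)
  rw [chiPDF_of_pos hy]
  positivity

lemma support_chiPDF_subset : Function.support (chiPDF n) ⊆ Ioi 0 := fun _ hy => by
  by_contra h
  exact hy (if_neg h)

lemma integrable_pow_mul_chiPDF (hn : 0 < n) (k : ℕ) :
    Integrable (fun t => t ^ k * chiPDF n t) := by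
  have hk : (0 : ℝ) ≤ k := k.cast_nonneg
  refine (integrableOn_iff_integrable_of_support_subset
    ((Function.support_mul_subset_right _ _).trans support_chiPDF_subset)).1 ?_
  refine IntegrableOn.congr_fun ((integrableOn_rpow_mul_exp_neg_mul_rpow (p := 1)
    (s := k + (n / 2 - 1)) (b := 1 / 2) (by linarith) one_pos one_half_pos).div_const
    (2 ^ (n / 2) * Gamma (n / 2))) (fun t (ht : 0 < t) => ?_) measurableSet_Ioi
  rw [chiPDF_of_pos ht, rpow_one, rpow_add ht, rpow_natCast]
  ring_nf

lemma integrable_chiPDF (hn : 0 < n) : Integrable (chiPDF n) := by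
  simpa using integrable_pow_mul_chiPDF hn 0

lemma integrable_sub_div_mul_chiPDF (hn : 0 < n) (a b : ℝ) :
    Integrable (fun t => (t - a) / b * chiPDF n t) := by
  refine (((integrable_pow_mul_chiPDF hn 1).sub
    ((integrable_chiPDF hn).const_mul a)).div_const b).congr (ae_of_all _ fun t => ?_)
  simp only [Pi.sub_apply, pow_one]
  ring

lemma chiSurv_pos (hn : 0 < n) {x : ℝ} (hx : 0 ≤ x) : 0 < chiSurv n x :=
  setIntegral_Ioi_pos (integrable_chiPDF hn).integrableOn fun _ ht => chiPDF_pos hn (hx.trans_lt ht)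

lemma continuousAt_chiPDF {x : ℝ} (hx : 0 < x) : ContinuousAt (chiPDF n) x := by
  refine ContinuousAt.congr ?_
    (eventually_of_mem (Ioi_mem_nhds hx) fun y hy => (chiPDF_of_pos hy).symm)
  exact ((continuous_exp.continuousAt.comp (by fun_prop)).mul
    (continuousAt_rpow_const _ _ (Or.inl hx.ne'))).div_const _

lemma hasDerivAt_chiSurv (hn : 0 < n) {x : ℝ} (hx : 0 < x) :
    HasDerivAt (chiSurv n) (-chiPDF n x) x := by
  have h_eq : chiSurv n = fun y => chiSurv n 0 - ∫ t in (0 : ℝ)..y, chiPDF n t := by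
    ext y
    rw [chiSurv, chiSurv, ← intervalIntegral.integral_Ioi_sub_Ioi'
      (integrable_chiPDF hn).integrableOn (integrable_chiPDF hn).integrableOn, sub_sub_cancel]
  rw [h_eq]
  exact (intervalIntegral.integral_hasDerivAt_right (integrable_chiPDF hn).intervalIntegrable
    (integrable_chiPDF hn).aestronglyMeasurable.stronglyMeasurableAtFilter
    (continuousAt_chiPDF hx)).const_sub _

lemma mul_chiPDF_of_pos {y : ℝ} (hy : 0 < y) :
    y * chiPDF n y = y ^ (n / 2) * exp (-(1 / 2) * y) / (2 ^ (n / 2) * Gamma (n / 2)) := by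
  rw [chiPDF_of_pos hy, show n / 2 = n / 2 - 1 + 1 by ring, rpow_add_one hy.ne']
  ring_nf

lemma tendsto_mul_chiPDF_atTop : Tendsto (fun y => y * chiPDF n y) atTop (𝓝 0) := by
  have h := (tendsto_rpow_mul_exp_neg_mul_atTop_nhds_zero (n / 2) (1 / 2) one_half_pos).div_const
    (2 ^ (n / 2) * Gamma (n / 2))
  rw [zero_div] at h
  refine h.congr' ?_
  filter_upwards [Ioi_mem_atTop 0] with y hy
  exact (mul_chiPDF_of_pos hy).symm

lemma hasDerivAt_mul_chiPDF {x : ℝ} (hx : 0 < x) :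
    HasDerivAt (fun y => y * chiPDF n y) ((n - x) / 2 * chiPDF n x) x := by
  have h_exp : HasDerivAt (fun y => exp (-(1 / 2) * y)) (exp (-(1 / 2) * x) * -(1 / 2)) x :=
    (hasDerivAt_exp _).comp x ((hasDerivAt_id x).const_mul _ |>.congr_deriv (mul_one _))
  have h := ((hasDerivAt_rpow_const (p := n / 2) (Or.inl hx.ne')).mul h_exp).div_const
    (2 ^ (n / 2) * Gamma (n / 2))
  refine (h.congr_deriv ?_).congr_of_eventuallyEq
    (eventually_of_mem (Ioi_mem_nhds hx) fun y hy => mul_chiPDF_of_pos hy)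
  rw [chiPDF_of_pos hx, show n / 2 = n / 2 - 1 + 1 by ring, rpow_add_one hx.ne']
  ring_nf

lemma integral_Ioi_sub_div_two_mul_chiPDF (hn : 0 < n) {x : ℝ} (hx : 0 < x) :
    ∫ t in Ioi x, (t - n) / 2 * chiPDF n t = x * chiPDF n x := by
  have h := integral_Ioi_of_hasDerivAt_of_tendsto'
    (fun t (ht : x ≤ t) => hasDerivAt_mul_chiPDF (hx.trans_le ht))
    ((integrable_sub_div_mul_chiPDF hn n (-2)).integrableOn.congr_fun (fun t _ => by ring)
      measurableSet_Ioi)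
    tendsto_mul_chiPDF_atTop
  rw [zero_sub] at h
  rw [← neg_neg (x * chiPDF n x), ← h, ← integral_neg]
  congr 1 with t
  ring

lemma sub_div_two_mul_chiSurv_lt_mul_chiPDF (hn : 0 < n) {x : ℝ} (hx : 0 < x) :
    (x - n) / 2 * chiSurv n x < x * chiPDF n x := by
  have h_pos : 0 < ∫ t in Ioi x, (t - x) / 2 * chiPDF n t :=
    setIntegral_Ioi_pos (integrable_sub_div_mul_chiPDF hn x 2).integrableOn fun t (ht : x < t) =>
      mul_pos (by linarith) (chiPDF_pos hn (hx.trans ht))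
  have h_split : ∫ t in Ioi x, (t - x) / 2 * chiPDF n t
      = x * chiPDF n x - (x - n) / 2 * chiSurv n x := by
    rw [← integral_Ioi_sub_div_two_mul_chiPDF hn hx, chiSurv, ← integral_const_mul,
      ← integral_sub (integrable_sub_div_mul_chiPDF hn n 2).integrableOn
        ((integrable_chiPDF hn).integrableOn.const_mul _)]
    congr 1 with t
    ring
  linarith

lemma strictMonoOn_mul_chiPDF_div_chiSurv (hn : 0 < n) :
    StrictMonoOn (fun x => x * chiPDF n x / chiSurv n x) (Ioi 0) :=
  strictMonoOn_Ioi_of_hasDerivAt_pos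
    (fun x (hx : 0 < x) => (hasDerivAt_mul_chiPDF hx).div (hasDerivAt_chiSurv hn hx)
      (chiSurv_pos hn hx.le).ne')
    fun x (hx : 0 < x) => by
      have h_key := sub_div_two_mul_chiSurv_lt_mul_chiPDF hn hx
      have hf := chiPDF_pos hn hx
      have hS := chiSurv_pos hn hx.le
      have h_num := mul_pos hf (show 0 < (n - x) / 2 * chiSurv n x + x * chiPDF n x by linarith)
      refine div_pos ?_ (by positivity)
      linarith

end ChiSquared

/-- Lemma 4: for `0 < w < w'`, the ratio `θ ↦ Ψ̄_n(θw) / Ψ̄_n(θw')` is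
monotonically increasing in `θ > 0`. -/
theorem chiSurv_ratio_strictMono (n w w' : ℝ) (hn : 0 < n) (hw : 0 < w) (hww' : w < w') :
    StrictMonoOn (fun θ => chiSurv n (θ * w) / chiSurv n (θ * w')) (Set.Ioi (0 : ℝ)) :=
  strictMonoOn_div_comp_mul_of_strictMonoOn_mul_div (fun _ hx => hasDerivAt_chiSurv hn hx)
    (fun _ hx => chiSurv_pos hn (le_of_lt hx)) (strictMonoOn_mul_chiPDF_div_chiSurv hn) hw hww'
end

section
/- If p-values P_1, ..., P_d are mutually independent, each true-null p-value P_i (i ∈ I_0) is stochastically larger than Uniform(0,1), then the FDR of the step-up procedure with constants α_i = iα_1 (the BH method) satisfies FDR ≤ |I_0| α_1 ≤ d α_1. -/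
open MeasureTheory ProbabilityTheory

/-- Step-up rejection count: `R = max{r ≤ d : #{i : p i ≤ α r} ≥ r}`. -/
noncomputable def stepUpR {d : ℕ} (α : ℕ → ℝ) (p : Fin d → ℝ) : ℕ :=
  sSup {r | r ≤ d ∧ r ≤ (Finset.univ.filter fun i => p i ≤ α r).card}

/-- False discovery proportion of the step-up procedure with constants `α` and
true-null index set `I0`. -/
noncomputable def stepUpFDP {d : ℕ} (α : ℕ → ℝ) (I0 : Finset (Fin d)) (p : Fin d → ℝ) : ℝ :=
  if stepUpR α p = 0 then 0
  else ((I0.filter fun i => p i ≤ α (stepUpR α p)).card : ℝ) / (stepUpR α p)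

/-!
Write `V / R` as `∑ i ∈ I₀, 1{pᵢ ≤ α R} / R`. Replacing `pᵢ` by `α 0` gives a count `R₋ᵢ ≥ 1`
that is a function of the other p-values only, hence independent of `pᵢ`, and
`1{pᵢ ≤ α R} / R = 1{pᵢ ≤ α R₋ᵢ} / R₋ᵢ` (on that event the two counts agree). Conditioning on
`R₋ᵢ = r`, each summand has expectation at most `∑ r, P(R₋ᵢ = r) · P(pᵢ ≤ r α₁) / r ≤ α₁`.
-/

section

open Finset

variable {d : ℕ} {α : ℕ → ℝ}

theorem stepUpR_eq_findGreatest (α : ℕ → ℝ) (p : Fin d → ℝ) :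
    stepUpR α p = Nat.findGreatest (fun r => r ≤ #{i | p i ≤ α r}) d := by
  refine le_antisymm (csSup_le ⟨0, by simp⟩ fun r hr => Nat.le_findGreatest hr.1 hr.2) ?_
  refine le_csSup ⟨d, fun r hr => hr.1⟩ ⟨Nat.findGreatest_le d, ?_⟩
  exact Nat.findGreatest_spec (P := fun r => r ≤ #{i | p i ≤ α r}) d.zero_le (Nat.zero_le _)

theorem stepUpR_le (α : ℕ → ℝ) (p : Fin d → ℝ) : stepUpR α p ≤ d :=
  stepUpR_eq_findGreatest α p ▸ Nat.findGreatest_le d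

theorem stepUpR_le_card (α : ℕ → ℝ) (p : Fin d → ℝ) :
    stepUpR α p ≤ #{i | p i ≤ α (stepUpR α p)} := by
  rw [stepUpR_eq_findGreatest]
  exact Nat.findGreatest_spec (P := fun r => r ≤ #{i | p i ≤ α r}) d.zero_le (Nat.zero_le _)

theorem le_stepUpR {p : Fin d → ℝ} {r : ℕ} (hrd : r ≤ d) (hr : r ≤ #{i | p i ≤ α r}) :
    r ≤ stepUpR α p :=
  stepUpR_eq_findGreatest α p ▸ Nat.le_findGreatest hrd hr

theorem measurable_stepUpR (α : ℕ → ℝ) : Measurable (stepUpR α : (Fin d → ℝ) → ℕ) := by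
  simp_rw [funext (stepUpR_eq_findGreatest α)]
  refine measurable_findGreatest fun r _ => measurableSet_le measurable_const ?_
  simp_rw [card_filter]
  exact Finset.measurable_sum _ fun j _ =>
    Measurable.ite (measurableSet_le (measurable_pi_apply j) measurable_const) measurable_const
      measurable_const

/-- The leave-one-out count `R₋ᵢ`: `p i` is replaced by `α 0`, which is rejected at every level. -/
noncomputable def stepUpRWithout (α : ℕ → ℝ) (p : Fin d → ℝ) (i : Fin d) : ℕ :=
  stepUpR α (Function.update p i (α 0))

theorem filter_update_le_eq_insert (hα : Monotone α) (p : Fin d → ℝ) (i : Fin d) (r : ℕ) :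
    (univ.filter fun j => Function.update p i (α 0) j ≤ α r) =
      insert i (univ.filter fun j => p j ≤ α r) := by
  ext j
  rcases eq_or_ne j i with rfl | hji
  · simpa using hα r.zero_le
  · simp [hji]

theorem stepUpR_le_stepUpRWithout (hα : Monotone α) (p : Fin d → ℝ) (i : Fin d) :
    stepUpR α p ≤ stepUpRWithout α p i := by
  refine le_stepUpR (stepUpR_le α p) ((stepUpR_le_card α p).trans ?_)
  rw [filter_update_le_eq_insert hα]
  exact card_le_card (subset_insert _ _)

theorem one_le_stepUpRWithout (hα : Monotone α) (p : Fin d → ℝ) (i : Fin d) :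
    1 ≤ stepUpRWithout α p i := by
  refine le_stepUpR i.pos ?_
  rw [filter_update_le_eq_insert hα, Nat.one_le_iff_ne_zero, ← pos_iff_ne_zero]
  exact card_pos.2 (insert_nonempty _ _)

theorem stepUpR_eq_stepUpRWithout (hα : Monotone α) {p : Fin d → ℝ} {i : Fin d}
    (h : p i ≤ α (stepUpRWithout α p i)) : stepUpR α p = stepUpRWithout α p i := by
  refine (stepUpR_le_stepUpRWithout hα p i).antisymm (le_stepUpR (stepUpR_le α _) ?_)
  refine (stepUpR_le_card α _).trans_eq ?_
  rw [stepUpRWithout, filter_update_le_eq_insert hα,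
    insert_eq_of_mem (mem_filter.2 ⟨mem_univ i, h⟩)]

/-- The summand of `V / R` contributed by a hypothesis with p-value `x` when `R = r`. -/
noncomputable def stepUpWeight (α : ℕ → ℝ) (r : ℕ) (x : ℝ) : ℝ :=
  if x ≤ α r then (r : ℝ)⁻¹ else 0

theorem stepUpFDP_eq_sum_stepUpWeight (α : ℕ → ℝ) (I0 : Finset (Fin d)) (p : Fin d → ℝ) :
    stepUpFDP α I0 p = ∑ i ∈ I0, stepUpWeight α (stepUpR α p) (p i) := by
  by_cases hR : stepUpR α p = 0
  · simp [stepUpFDP, stepUpWeight, hR]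
  · rw [stepUpFDP, if_neg hR, card_filter, Nat.cast_sum, sum_div]
    refine sum_congr rfl fun i _ => ?_
    by_cases hi : p i ≤ α (stepUpR α p) <;> simp [stepUpWeight, hi]

theorem stepUpWeight_stepUpRWithout (hα : Monotone α) (p : Fin d → ℝ) (i : Fin d) :
    stepUpWeight α (stepUpRWithout α p i) (p i) = stepUpWeight α (stepUpR α p) (p i) := by
  by_cases h : p i ≤ α (stepUpRWithout α p i)
  · rw [stepUpR_eq_stepUpRWithout hα h]
  · have h' : ¬ p i ≤ α (stepUpR α p) := fun h' =>
      h (h'.trans (hα (stepUpR_le_stepUpRWithout hα p i)))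
    simp [stepUpWeight, h, h']

namespace ProbabilityTheory

theorem iIndepFun.indepFun_update {Ω ι β γ : Type*} [MeasurableSpace Ω] {P : Measure Ω}
    [Fintype ι] [DecidableEq ι] [MeasurableSpace β] [MeasurableSpace γ] {X : ι → Ω → β}
    (hX_indep : iIndepFun X P) (hX : ∀ j, Measurable (X j)) {F : (ι → β) → γ}
    (hF : Measurable F) (i : ι) (b : β) :
    IndepFun (fun ω => F (Function.update (fun j => X j ω) i b)) (X i) P := by
  let extend (v : univ.erase i → β) (j : ι) : β := if h : j ∈ univ.erase i then v ⟨j, h⟩ else b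
  have h_extend : Measurable extend := measurable_pi_lambda _ fun j => by
    by_cases h : j ∈ univ.erase i
    · simp only [extend, dif_pos h]; exact measurable_pi_apply _
    · simp only [extend, dif_neg h]; exact measurable_const
  have h := (hX_indep.indepFun_finset (univ.erase i) {i} (by simp) hX).comp (hF.comp h_extend)
    (measurable_pi_apply (X := fun _ : ({i} : Finset ι) => β) ⟨i, mem_singleton_self i⟩)
  convert h using 1
  · ext ω
    simp only [Function.comp_apply]
    congr 1
    ext j
    rcases eq_or_ne j i with rfl | hji <;> simp [extend, *]
  · rfl

end ProbabilityTheory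

variable {Ω : Type*} {N : Ω → ℕ} {X : Ω → ℝ} {S : Finset ℕ}

theorem stepUpWeight_eq_sum_indicator (α : ℕ → ℝ) (hNS : ∀ ω, N ω ∈ S) (ω : Ω) :
    stepUpWeight α (N ω) (X ω) =
      ∑ r ∈ S, (N ⁻¹' {r} ∩ X ⁻¹' Set.Iic (α r)).indicator (fun _ => (r : ℝ)⁻¹) ω := by
  classical
  rw [sum_eq_single_of_mem (N ω) (hNS ω) fun r _ hr => Set.indicator_of_notMem
    (fun h => hr h.1.symm) _]
  simp [stepUpWeight, Set.indicator_apply]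

variable [MeasurableSpace Ω] {P : Measure Ω}

theorem integrable_stepUpWeight [IsFiniteMeasure P] (α : ℕ → ℝ) (hN : Measurable N)
    (hX : Measurable X) (hNS : ∀ ω, N ω ∈ S) :
    Integrable (fun ω => stepUpWeight α (N ω) (X ω)) P := by
  simp_rw [stepUpWeight_eq_sum_indicator α hNS]
  exact integrable_finsetSum _ fun r _ => (integrable_const _).indicator
    ((hN (measurableSet_singleton r)).inter (hX measurableSet_Iic))

theorem integral_stepUpWeight_le [IsProbabilityMeasure P] (α : ℕ → ℝ) (hN : Measurable N)
    (hX : Measurable X) (hNX : IndepFun N X P) (hNS : ∀ ω, N ω ∈ S) (hS : 0 ∉ S) {c : ℝ}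
    (hXS : ∀ r ∈ S, P.real {ω | X ω ≤ α r} ≤ r * c) :
    ∫ ω, stepUpWeight α (N ω) (X ω) ∂P ≤ c := by
  have hA (r : ℕ) : MeasurableSet (N ⁻¹' {r}) := hN (measurableSet_singleton r)
  have hB (r : ℕ) : MeasurableSet (X ⁻¹' Set.Iic (α r)) := hX measurableSet_Iic
  have hterm : ∀ r ∈ S, P.real (N ⁻¹' {r} ∩ X ⁻¹' Set.Iic (α r)) * (r : ℝ)⁻¹ ≤
      P.real (N ⁻¹' {r}) * c := by
    intro r hr
    have hr0 : (0 : ℝ) < r := Nat.cast_pos.2 (Nat.pos_of_ne_zero (ne_of_mem_of_not_mem hr hS))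
    calc P.real (N ⁻¹' {r} ∩ X ⁻¹' Set.Iic (α r)) * (r : ℝ)⁻¹
        = P.real (N ⁻¹' {r}) * P.real (X ⁻¹' Set.Iic (α r)) * (r : ℝ)⁻¹ := by
          simp only [measureReal_def, hNX.measure_inter_preimage_eq_mul _ _
            (measurableSet_singleton r) measurableSet_Iic, ENNReal.toReal_mul]
      _ ≤ P.real (N ⁻¹' {r}) * (r * c) * (r : ℝ)⁻¹ := by gcongr; exact hXS r hr
      _ = P.real (N ⁻¹' {r}) * c := by field_simp
  calc ∫ ω, stepUpWeight α (N ω) (X ω) ∂P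
      = ∑ r ∈ S, P.real (N ⁻¹' {r} ∩ X ⁻¹' Set.Iic (α r)) * (r : ℝ)⁻¹ := by
        simp_rw [stepUpWeight_eq_sum_indicator α hNS]
        rw [integral_finsetSum _ fun r _ => (integrable_const _).indicator ((hA r).inter (hB r))]
        simp only [integral_indicator_const _ ((hA _).inter (hB _)), smul_eq_mul]
    _ ≤ ∑ r ∈ S, P.real (N ⁻¹' {r}) * c := sum_le_sum hterm
    _ = c := by
      have hS_univ : N ⁻¹' S = Set.univ := Set.eq_univ_of_forall hNS
      rw [← sum_mul, sum_measureReal_preimage_singleton S fun r _ => hA r, hS_univ,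
        probReal_univ, one_mul]

theorem measurable_stepUpRWithout {p : Ω → Fin d → ℝ} (hp : Measurable p) (i : Fin d) :
    Measurable fun ω => stepUpRWithout α (p ω) i :=
  (measurable_stepUpR α).comp (measurable_update_left.comp hp)

theorem stepUpRWithout_mem_Icc (hα : Monotone α) (p : Fin d → ℝ) (i : Fin d) :
    stepUpRWithout α p i ∈ Icc 1 d :=
  mem_Icc.2 ⟨one_le_stepUpRWithout hα p i, stepUpR_le α _⟩

theorem integral_stepUpFDP_le [IsProbabilityMeasure P] (hα : Monotone α) {p : Ω → Fin d → ℝ}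
    (hp : Measurable p) (hindep : iIndepFun (fun i ω => p ω i) P) (I0 : Finset (Fin d)) {c : ℝ}
    (hnull : ∀ i ∈ I0, ∀ r ∈ Icc 1 d, P.real {ω | p ω i ≤ α r} ≤ r * c) :
    ∫ ω, stepUpFDP α I0 (p ω) ∂P ≤ #I0 * c := by
  have hterm : ∀ i ∈ I0, ∫ ω, stepUpWeight α (stepUpRWithout α (p ω) i) (p ω i) ∂P ≤ c :=
    fun i hi => integral_stepUpWeight_le α (measurable_stepUpRWithout hp i) hp.eval
      (hindep.indepFun_update (fun _ => hp.eval) (measurable_stepUpR α) i (α 0))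
      (fun ω => stepUpRWithout_mem_Icc hα (p ω) i) (by simp) (hnull i hi)
  calc ∫ ω, stepUpFDP α I0 (p ω) ∂P
      = ∫ ω, ∑ i ∈ I0, stepUpWeight α (stepUpRWithout α (p ω) i) (p ω i) ∂P := by
        simp_rw [stepUpWeight_stepUpRWithout hα, stepUpFDP_eq_sum_stepUpWeight]
    _ = ∑ i ∈ I0, ∫ ω, stepUpWeight α (stepUpRWithout α (p ω) i) (p ω i) ∂P :=
        integral_finsetSum _ fun i _ => integrable_stepUpWeight α
          (measurable_stepUpRWithout hp i) hp.eval fun ω => stepUpRWithout_mem_Icc hα (p ω) i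
    _ ≤ ∑ i ∈ I0, c := sum_le_sum hterm
    _ = #I0 * c := by simp

end

/-- BH under independence: if the p-values are mutually independent and each true-null p-value
is stochastically larger than Uniform(0,1), then the FDR of the BH step-up procedure with
constants `α_i = i·α₁` is at most `|I0|·α₁ ≤ d·α₁`. -/
theorem BH_FDR_control_indep {Ω : Type*} [MeasurableSpace Ω] (P : Measure Ω)
    [IsProbabilityMeasure P] {d : ℕ} (p : Ω → Fin d → ℝ) (hp : Measurable p)
    (hindep : iIndepFun (fun i ω => p ω i) P)
    (I0 : Finset (Fin d))
    (hnull : ∀ i ∈ I0, ∀ u : ℝ, 0 ≤ u → u ≤ 1 → P {ω | p ω i ≤ u} ≤ ENNReal.ofReal u)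
    (α₁ : ℝ) (hα₁ : 0 < α₁) (hdα₁ : (d : ℝ) * α₁ < 1) :
    ∫ ω, stepUpFDP (fun r => (r : ℝ) * α₁) I0 (p ω) ∂P ≤ (I0.card : ℝ) * α₁ ∧
      (I0.card : ℝ) * α₁ ≤ (d : ℝ) * α₁ := by
  have hα : Monotone fun r : ℕ => (r : ℝ) * α₁ := fun a b hab =>
    mul_le_mul_of_nonneg_right (Nat.cast_le.2 hab) hα₁.le
  refine ⟨integral_stepUpFDP_le hα hp hindep I0 fun i hi r hr => ?_,
    by gcongr; simpa using Finset.card_le_univ I0⟩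
  have hr_le_one : (r : ℝ) * α₁ ≤ 1 :=
    le_trans (by gcongr; exact_mod_cast (Finset.mem_Icc.1 hr).2) hdα₁.le
  exact ENNReal.toReal_le_of_le_ofReal (by positivity) (hnull i hi _ (by positivity) hr_le_one)
end
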